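/- Let Γ be a finite connected simple graph with vertex set V, let 𝒯 and 𝒯̃ be maximal tubings of Γ, and let w and w̃ be their weight vectors. Then for every tube T ∈ 𝒯, one has Σ_{v ∈ T} w̃(v) ≥ Σ_{v ∈ T} w(v); moreover equality holds if T ∈ 𝒯̃, and the inequality is strict if T ∉ 𝒯̃. -/

import Mathlib

/-!
Write `f n = 3 ^ (n - 2)` for `n ≥ 2` and `f 0 = f 1 = 0` (`totalWeight` below). Every member
`S` of `𝒯 ∪ {V}` has a root, a vertex lying in no smaller tube of `𝒯` (a connected set cannot be
covered by the pairwise separated tubes maximal below `S`), and `S` is the smallest member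
containing its root; so the recursion at the root reads `∑_{v ∈ S} w v = f |S|`. In a maximal
tubing the root is unique, hence the tubes maximal below `S` partition `S \ {r}`, and
superadditivity of `f` gives `w r ≥ f |S| - f (|S| - 1)`; in particular all weights are
nonnegative.

For `T ∈ 𝒯 \ 𝒯'`, let `S` be the smallest member of `𝒯' ∪ {V}` containing `T`. The root `r`
of `S` lies in `T`, otherwise the connected set `T` would lie in a tube of `𝒯'` maximal below
`S`. Therefore `∑_T w' ≥ w' r ≥ f |S| - f (|S| - 1) > f (|S| - 1) ≥ f |T| = ∑_T w`.
-/

variable {V : Type*} [Fintype V] [DecidableEq V]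

/-- A tube of a simple graph: a nonempty proper subset of vertices whose
induced subgraph is connected. -/
def IsTube (G : SimpleGraph V) (T : Finset V) : Prop :=
  T.Nonempty ∧ T ≠ Finset.univ ∧ (G.induce (T : Set V)).Connected

/-- A tubing: a set of tubes, pairwise either properly nested or disjoint with
no edge between them. -/
def IsTubing (G : SimpleGraph V) (𝒯 : Finset (Finset V)) : Prop :=
  (∀ T ∈ 𝒯, IsTube G T) ∧
  ∀ T ∈ 𝒯, ∀ T' ∈ 𝒯, T ≠ T' →
    T ⊂ T' ∨ T' ⊂ T ∨
      ((∀ v ∈ T, v ∉ T') ∧ ∀ u ∈ T, ∀ v ∈ T', ¬ G.Adj u v)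

/-- A maximal tubing: one not properly contained in any other tubing. -/
def IsMaxTubing (G : SimpleGraph V) (𝒯 : Finset (Finset V)) : Prop :=
  IsTubing G 𝒯 ∧ ∀ 𝒯' : Finset (Finset V), IsTubing G 𝒯' → 𝒯 ⊆ 𝒯' → 𝒯' = 𝒯

/-- `w` is the weight vector of the maximal tubing `𝒯`: for each vertex `v`,
if the minimal element `T` of `𝒯 ∪ {univ}` containing `v` is the singleton
`{v}` then `w v = 0`, and otherwise (`|T| ≥ 2`)
`w v = 3^(|T|-2) - ∑_{v' ∈ T, v' ≠ v} w v'`. -/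
def IsWeightVector (𝒯 : Finset (Finset V)) (w : V → ℤ) : Prop :=
  ∀ v : V, ∀ T ∈ insert Finset.univ 𝒯, v ∈ T →
    (∀ S ∈ insert Finset.univ 𝒯, v ∈ S → T ⊆ S) →
    (T = {v} → w v = 0) ∧
    (2 ≤ T.card → w v = 3 ^ (T.card - 2) - ∑ v' ∈ T.erase v, w v')

open Finset

namespace SimpleGraph

variable {α : Type*} {G : SimpleGraph α}

def Separated (G : SimpleGraph α) (A B : Finset α) : Prop :=
  (∀ v ∈ A, v ∉ B) ∧ ∀ u ∈ A, ∀ v ∈ B, ¬ G.Adj u v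

theorem Separated.symm {A B : Finset α} (h : G.Separated A B) : G.Separated B A :=
  ⟨fun v hvB hvA => h.1 v hvA hvB, fun u huB v hvA huv => h.2 v hvA u huB huv.symm⟩

theorem Separated.mono_left {A A' B : Finset α} (h : G.Separated A B) (hA : A' ⊆ A) :
    G.Separated A' B :=
  ⟨fun v hv => h.1 v (hA hv), fun u hu => h.2 u (hA hu)⟩

theorem subset_of_induce_preconnected {s t : Set α} (hs : (G.induce s).Preconnected)
    {x : α} (hxs : x ∈ s) (hxt : x ∈ t)
    (hclosed : ∀ u ∈ s, ∀ v ∈ s, u ∈ t → G.Adj u v → v ∈ t) : s ⊆ t := by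
  intro y hys
  by_contra hyt
  obtain ⟨p⟩ := hs ⟨x, hxs⟩ ⟨y, hys⟩
  obtain ⟨d, -, hd₁, hd₂⟩ := p.exists_boundary_dart {z | z.1 ∈ t} hxt hyt
  exact hd₂ (hclosed _ d.fst.2 _ d.snd.2 hd₁ d.adj)

theorem subset_or_separated_of_closed {A B C : Finset α}
    (hA : (G.induce (A : Set α)).Preconnected) (hAB : A ⊆ B)
    (hC : ∀ x ∈ C, ∀ y ∈ B, G.Adj x y → y ∈ C) : A ⊆ C ∨ G.Separated C A := by
  by_cases hmeet : ∃ x ∈ A, x ∈ C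
  · obtain ⟨x, hxA, hxC⟩ := hmeet
    exact Or.inl <| coe_subset.1 <| subset_of_induce_preconnected hA hxA hxC
      fun u _ v hv huC huv => hC u huC v (hAB hv) huv
  · push Not at hmeet
    exact Or.inr ⟨fun v hvC hvA => hmeet v hvA hvC,
      fun x hxC y hyA hxy => hmeet y hyA (hC x hxC y (hAB hyA) hxy)⟩

theorem exists_connected_closed_subset (B : Finset α) {u : α} (hu : u ∈ B) :
    ∃ C ⊆ B, u ∈ C ∧ (G.induce (C : Set α)).Connected ∧
      ∀ x ∈ C, ∀ y ∈ B, G.Adj x y → y ∈ C := by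
  classical
  let C := B.filter fun x => ∃ p : G.Walk u x, ∀ z ∈ p.support, z ∈ B
  have mem_C (x : α) : x ∈ C ↔ x ∈ B ∧ ∃ p : G.Walk u x, ∀ z ∈ p.support, z ∈ B :=
    mem_filter
  have huC : u ∈ C := (mem_C u).2 ⟨hu, .nil, by simpa using hu⟩
  refine ⟨C, filter_subset _ _, huC, ?_, ?_⟩
  · refine induce_connected_of_patches u huC fun {v} hv => ?_
    obtain ⟨-, p, hp⟩ := (mem_C v).1 hv
    refine ⟨{z | z ∈ p.support}, fun z hz => (mem_C z).2 ⟨hp z hz, p.takeUntil z hz,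
      fun y hy => hp y (p.support_takeUntil_subset_support hz hy)⟩,
      p.start_mem_support, p.end_mem_support, p.connected_induce_support _ _⟩
  · intro x hx y hy hxy
    obtain ⟨-, p, hp⟩ := (mem_C x).1 hx
    refine (mem_C y).2 ⟨hy, p.concat hxy, fun z hz => ?_⟩
    rw [Walk.support_concat, List.mem_append, List.mem_singleton] at hz
    rcases hz with hz | rfl
    exacts [hp z hz, hy]

end SimpleGraph

open SimpleGraph

section

variable {α : Type*} [DecidableEq α] {𝒯 : Finset (Finset α)} {A S : Finset α}

def childTubes (𝒯 : Finset (Finset α)) (S : Finset α) : Finset (Finset α) :=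
  {A ∈ 𝒯 | A ⊂ S ∧ ∀ B ∈ 𝒯, A ⊆ B → B ⊂ S → B = A}

theorem mem_childTubes {C : Finset α} :
    C ∈ childTubes 𝒯 S ↔ C ∈ 𝒯 ∧ C ⊂ S ∧ ∀ B ∈ 𝒯, C ⊆ B → B ⊂ S → B = C := by
  simp only [childTubes, mem_filter]

theorem exists_mem_childTubes_superset (hA : A ∈ 𝒯) (hAS : A ⊂ S) :
    ∃ C ∈ childTubes 𝒯 S, A ⊆ C := by
  obtain ⟨C, hAC, hC, hCmax⟩ := exists_le_maximal {B ∈ 𝒯 | B ⊂ S} (mem_filter.2 ⟨hA, hAS⟩)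
  rw [mem_filter] at hC
  refine ⟨C, mem_childTubes.2 ⟨hC.1, hC.2, fun B hB hCB hBS => ?_⟩, hAC⟩
  exact le_antisymm (hCmax (mem_filter.2 ⟨hB, hBS⟩) hCB) hCB

def IsRoot (𝒯 : Finset (Finset α)) (S : Finset α) (r : α) : Prop :=
  r ∈ S ∧ ∀ A ∈ 𝒯, A ⊂ S → r ∉ A

end

def totalWeight (n : ℕ) : ℤ := if n ≤ 1 then 0 else 3 ^ (n - 2)

theorem totalWeight_of_le_one {n : ℕ} (hn : n ≤ 1) : totalWeight n = 0 := if_pos hn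

theorem totalWeight_of_two_le {n : ℕ} (hn : 2 ≤ n) : totalWeight n = 3 ^ (n - 2) :=
  if_neg (by omega)

theorem totalWeight_mono : Monotone totalWeight := by
  intro m n hmn
  unfold totalWeight
  split_ifs <;> first | omega | positivity | exact pow_le_pow_right₀ (by norm_num) (by omega)

theorem totalWeight_add_le (m n : ℕ) : totalWeight m + totalWeight n ≤ totalWeight (m + n) := by
  rcases le_or_gt m 1 with hm | hm
  · rw [totalWeight_of_le_one hm, zero_add]
    exact totalWeight_mono (by omega)
  rcases le_or_gt n 1 with hn | hn
  · rw [totalWeight_of_le_one hn, add_zero]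
    exact totalWeight_mono (by omega)
  obtain ⟨a, rfl⟩ : ∃ a, m = a + 2 := ⟨m - 2, by omega⟩
  obtain ⟨b, rfl⟩ : ∃ b, n = b + 2 := ⟨n - 2, by omega⟩
  rw [totalWeight_of_two_le (by omega), totalWeight_of_two_le (by omega),
    totalWeight_of_two_le (by omega), show a + 2 + (b + 2) - 2 = a + b + 2 by omega,
    Nat.add_sub_cancel, Nat.add_sub_cancel, pow_add, pow_add]
  nlinarith [one_le_pow₀ (show (1 : ℤ) ≤ 3 by norm_num) (n := a),
    one_le_pow₀ (show (1 : ℤ) ≤ 3 by norm_num) (n := b)]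

theorem sum_totalWeight_le {ι : Type*} (s : Finset ι) (g : ι → ℕ) :
    ∑ i ∈ s, totalWeight (g i) ≤ totalWeight (∑ i ∈ s, g i) := by
  have := le_sum_of_subadditive (fun n => -totalWeight n) (by simp [totalWeight])
    (fun m n => by linarith [totalWeight_add_le m n]) s g
  simpa only [sum_neg_distrib, neg_le_neg_iff] using this

theorem two_mul_totalWeight_lt {n : ℕ} (hn : 1 ≤ n) :
    2 * totalWeight n < totalWeight (n + 1) := by
  rcases eq_or_lt_of_le hn with rfl | hn
  · decide
  rw [totalWeight_of_two_le hn, totalWeight_of_two_le (by omega),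
    show n + 1 - 2 = n - 2 + 1 by omega, pow_succ]
  linarith [pow_pos (show (0 : ℤ) < 3 by norm_num) (n - 2)]

variable {G : SimpleGraph V} {𝒯 : Finset (Finset V)} {A S T : Finset V}

namespace IsTubing

variable (ht : IsTubing G 𝒯)
include ht

theorem ssubset_or_superset_or_separated (hA : A ∈ 𝒯) (hS : S ∈ insert univ 𝒯) :
    A ⊂ S ∨ S ⊆ A ∨ G.Separated A S := by
  rcases mem_insert.1 hS with rfl | hS
  · exact Or.inl (ssubset_univ_iff.2 (ht.1 A hA).2.1)
  rcases eq_or_ne A S with rfl | hne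
  · exact Or.inr (Or.inl subset_rfl)
  rcases ht.2 A hA S hS hne with h | h | h
  · exact Or.inl h
  · exact Or.inr (Or.inl h.subset)
  · exact Or.inr (Or.inr h)

theorem subset_or_subset {B : Finset V} (hA : A ∈ insert univ 𝒯) (hB : B ∈ insert univ 𝒯)
    {v : V} (hvA : v ∈ A) (hvB : v ∈ B) : A ⊆ B ∨ B ⊆ A := by
  rcases mem_insert.1 hA with rfl | hA
  · exact Or.inr (subset_univ B)
  rcases ht.ssubset_or_superset_or_separated hA hB with h | h | h
  · exact Or.inl h.subset
  · exact Or.inr h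
  · exact absurd hvB (h.1 v hvA)

theorem insert_tube (hT : IsTube G T)
    (hcompat : ∀ A ∈ 𝒯, A ≠ T → T ⊂ A ∨ A ⊂ T ∨ G.Separated T A) :
    IsTubing G (insert T 𝒯) := by
  refine ⟨fun A hA => ?_, fun A hA B hB hAB => ?_⟩
  · rcases mem_insert.1 hA with rfl | hA
    exacts [hT, ht.1 A hA]
  rcases mem_insert.1 hA with rfl | hA𝒯
  · rcases mem_insert.1 hB with rfl | hB𝒯
    · exact absurd rfl hAB
    · exact hcompat B hB𝒯 hAB.symm
  · rcases mem_insert.1 hB with rfl | hB𝒯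
    · rcases hcompat A hA𝒯 hAB with h | h | h
      exacts [Or.inr (Or.inl h), Or.inl h, Or.inr (Or.inr h.symm)]
    · exact ht.2 A hA𝒯 B hB𝒯 hAB

theorem induce_connected (hG : G.Connected) (hS : S ∈ insert univ 𝒯) :
    (G.induce (S : Set V)).Connected := by
  rcases mem_insert.1 hS with rfl | hS
  · rw [coe_univ]
    exact (induceUnivIso G).connected_iff.2 hG
  · exact (ht.1 S hS).2.2

theorem separated_of_mem_childTubes {C C' : Finset V} (hC : C ∈ childTubes 𝒯 S)
    (hC' : C' ∈ childTubes 𝒯 S) (hne : C ≠ C') : G.Separated C C' := by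
  obtain ⟨hC𝒯, hCS, hCmax⟩ := mem_childTubes.1 hC
  obtain ⟨hC'𝒯, hC'S, hC'max⟩ := mem_childTubes.1 hC'
  rcases ht.2 C hC𝒯 C' hC'𝒯 hne with h | h | h
  · exact absurd (hCmax C' hC'𝒯 h.subset hC'S).symm hne
  · exact absurd (hC'max C hC𝒯 h.subset hCS) hne
  · exact h

theorem exists_mem_childTubes_superset_of_connected (hT : (G.induce (T : Set V)).Connected)
    (hcov : ∀ v ∈ T, ∃ A ∈ 𝒯, A ⊂ S ∧ v ∈ A) : ∃ C ∈ childTubes 𝒯 S, T ⊆ C := by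
  have hchild : ∀ v ∈ T, ∃ C ∈ childTubes 𝒯 S, v ∈ C := fun v hv => by
    obtain ⟨A, hA, hAS, hvA⟩ := hcov v hv
    obtain ⟨C, hC, hAC⟩ := exists_mem_childTubes_superset hA hAS
    exact ⟨C, hC, hAC hvA⟩
  obtain ⟨⟨x, hx⟩⟩ := hT.nonempty
  obtain ⟨C, hC, hxC⟩ := hchild x hx
  refine ⟨C, hC, coe_subset.1 (subset_of_induce_preconnected hT.preconnected hx hxC ?_)⟩
  intro u _ v hv huC huv
  obtain ⟨C', hC', hvC'⟩ := hchild v hv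
  by_contra hvC
  have hne : C ≠ C' := by rintro rfl; exact hvC hvC'
  exact (ht.separated_of_mem_childTubes hC hC' hne).2 u huC v hvC' huv

theorem exists_isRoot (hS : (G.induce (S : Set V)).Connected) : ∃ r, IsRoot 𝒯 S r := by
  by_contra! hno
  have hcov : ∀ v ∈ S, ∃ A ∈ 𝒯, A ⊂ S ∧ v ∈ A := fun v hv => by
    simpa [IsRoot, hv] using hno v
  obtain ⟨C, hC, hSC⟩ := ht.exists_mem_childTubes_superset_of_connected hS hcov
  exact (mem_childTubes.1 hC).2.1.2 hSC

theorem subset_of_isRoot {r : V} (hS : S ∈ insert univ 𝒯) (hr : IsRoot 𝒯 S r) :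
    ∀ S' ∈ insert univ 𝒯, r ∈ S' → S ⊆ S' := by
  intro S' hS' hrS'
  rcases ht.subset_or_subset hS hS' hr.1 hrS' with h | h
  · exact h
  rcases mem_insert.1 hS' with rfl | hS'𝒯
  · exact subset_univ S
  by_contra hSS'
  exact hr.2 S' hS'𝒯 (lt_of_le_not_ge h hSS') hrS'

theorem exists_least_superset (hT : T.Nonempty) :
    ∃ S ∈ insert univ 𝒯, T ⊆ S ∧ ∀ S' ∈ insert univ 𝒯, T ⊆ S' → S ⊆ S' := by
  obtain ⟨S, -, hS, hSmin⟩ := exists_minimal_le_of_wellFoundedLT (· ∈ {S ∈ insert univ 𝒯 | T ⊆ S})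
    univ (mem_filter.2 ⟨mem_insert_self _ _, subset_univ T⟩)
  rw [mem_filter] at hS
  refine ⟨S, hS.1, hS.2, fun S' hS' hTS' => ?_⟩
  obtain ⟨v, hv⟩ := hT
  rcases ht.subset_or_subset hS.1 hS' (hS.2 hv) (hTS' hv) with h | h
  exacts [h, hSmin (mem_filter.2 ⟨hS', hTS'⟩) h]

theorem weight_root_eq {w : V → ℤ} (hw : IsWeightVector 𝒯 w) {r : V} (hS : S ∈ insert univ 𝒯)
    (hr : IsRoot 𝒯 S r) : w r = totalWeight S.card - ∑ v ∈ S.erase r, w v := by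
  obtain ⟨hsingleton, hlarge⟩ := hw r S hS hr.1 (ht.subset_of_isRoot hS hr)
  rcases le_or_gt S.card 1 with h1 | h2
  · obtain rfl : S = {r} :=
      eq_singleton_iff_unique_mem.2 ⟨hr.1, fun x hx => card_le_one.1 h1 x hx r hr.1⟩
    simp [hsingleton rfl, totalWeight_of_le_one]
  · rw [hlarge h2, totalWeight_of_two_le h2]

theorem sum_eq_totalWeight {w : V → ℤ} (hw : IsWeightVector 𝒯 w) (hS : S ∈ insert univ 𝒯)
    (hSconn : (G.induce (S : Set V)).Connected) : ∑ v ∈ S, w v = totalWeight S.card := by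
  obtain ⟨r, hr⟩ := ht.exists_isRoot hSconn
  rw [← add_sum_erase S w hr.1, ht.weight_root_eq hw hS hr, sub_add_cancel]

theorem sum_eq_totalWeight_of_mem {w : V → ℤ} (hw : IsWeightVector 𝒯 w) (hS : S ∈ 𝒯) :
    ∑ v ∈ S, w v = totalWeight S.card :=
  ht.sum_eq_totalWeight hw (mem_insert_of_mem hS) (ht.1 S hS).2.2

end IsTubing

namespace IsMaxTubing

variable (hmax : IsMaxTubing G 𝒯)
include hmax

theorem exists_mem_ssubset_of_ne_root {r u : V} (hS : S ∈ insert univ 𝒯) (hr : IsRoot 𝒯 S r)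
    (hu : u ∈ S) (hur : u ≠ r) : ∃ A ∈ 𝒯, A ⊂ S ∧ u ∈ A := by
  by_contra! hno
  -- the component of `u` in `S \ {r}` is a tube compatible with every tube of `𝒯`
  obtain ⟨C, hCB, huC, hCconn, hCclosed⟩ :=
    exists_connected_closed_subset (G := G) (S.erase r) (mem_erase.2 ⟨hur, hu⟩)
  have hrC : r ∉ C := fun h => (mem_erase.1 (hCB h)).1 rfl
  have hCS : C ⊂ S := hCB.trans_ssubset (erase_ssubset hr.1)
  have hCtube : IsTube G C := ⟨⟨u, huC⟩, fun h => hrC (h ▸ mem_univ r), hCconn⟩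
  have hcompat : ∀ A ∈ 𝒯, A ≠ C → C ⊂ A ∨ A ⊂ C ∨ G.Separated C A := by
    intro A hA hAC
    rcases hmax.1.ssubset_or_superset_or_separated hA hS with hAS | hSA | hsep
    · have hAB : A ⊆ S.erase r := fun x hx =>
        mem_erase.2 ⟨fun h => hr.2 A hA hAS (h ▸ hx), hAS.subset hx⟩
      rcases subset_or_separated_of_closed (hmax.1.1 A hA).2.2.preconnected hAB hCclosed
        with h | h
      exacts [Or.inr (Or.inl (lt_of_le_of_ne h hAC)), Or.inr (Or.inr h)]
    · exact Or.inl (hCS.trans_le hSA)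
    · exact Or.inr (Or.inr (hsep.symm.mono_left hCS.subset))
  have hC𝒯 := hmax.2 _ (hmax.1.insert_tube hCtube hcompat) (subset_insert _ _)
  exact hno C (hC𝒯 ▸ mem_insert_self C 𝒯) hCS huC

theorem biUnion_childTubes {r : V} (hS : S ∈ insert univ 𝒯) (hr : IsRoot 𝒯 S r) :
    (childTubes 𝒯 S).biUnion id = S.erase r := by
  ext x
  simp only [mem_biUnion, id, mem_erase]
  constructor
  · rintro ⟨C, hC, hxC⟩
    obtain ⟨hC𝒯, hCS, -⟩ := mem_childTubes.1 hC
    exact ⟨fun h => hr.2 C hC𝒯 hCS (h ▸ hxC), hCS.subset hxC⟩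
  · rintro ⟨hxr, hxS⟩
    obtain ⟨A, hA, hAS, hxA⟩ := hmax.exists_mem_ssubset_of_ne_root hS hr hxS hxr
    obtain ⟨C, hC, hAC⟩ := exists_mem_childTubes_superset hA hAS
    exact ⟨C, hC, hAC hxA⟩

theorem sum_erase_root_le {w : V → ℤ} (hw : IsWeightVector 𝒯 w) {r : V}
    (hS : S ∈ insert univ 𝒯) (hr : IsRoot 𝒯 S r) :
    ∑ v ∈ S.erase r, w v ≤ totalWeight (S.erase r).card := by
  have hdisj : (childTubes 𝒯 S : Set (Finset V)).PairwiseDisjoint id := fun C hC C' hC' hne =>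
    disjoint_left.2 (hmax.1.separated_of_mem_childTubes hC hC' hne).1
  rw [← hmax.biUnion_childTubes hS hr, sum_biUnion hdisj, card_biUnion hdisj]
  calc ∑ C ∈ childTubes 𝒯 S, ∑ v ∈ C, w v = ∑ C ∈ childTubes 𝒯 S, totalWeight C.card :=
        sum_congr rfl fun C hC => hmax.1.sum_eq_totalWeight_of_mem hw (mem_childTubes.1 hC).1
    _ ≤ totalWeight (∑ C ∈ childTubes 𝒯 S, C.card) := sum_totalWeight_le _ _

theorem totalWeight_sub_le_weight_root {w : V → ℤ} (hw : IsWeightVector 𝒯 w) {r : V}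
    (hS : S ∈ insert univ 𝒯) (hr : IsRoot 𝒯 S r) :
    totalWeight S.card - totalWeight (S.erase r).card ≤ w r := by
  rw [hmax.1.weight_root_eq hw hS hr]
  linarith [hmax.sum_erase_root_le hw hS hr]

theorem weight_nonneg {w : V → ℤ} (hw : IsWeightVector 𝒯 w) (v : V) : 0 ≤ w v := by
  obtain ⟨S, hS, hvS, hleast⟩ := hmax.1.exists_least_superset (singleton_nonempty v)
  have hr : IsRoot 𝒯 S v := ⟨singleton_subset_iff.1 hvS, fun A hA hAS hvA =>
    hAS.2 (hleast A (mem_insert_of_mem hA) (singleton_subset_iff.2 hvA))⟩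
  linarith [hmax.totalWeight_sub_le_weight_root hw hS hr,
    totalWeight_mono (card_erase_le (s := S) (a := v))]

theorem totalWeight_lt_sum (hG : G.Connected) {w : V → ℤ} (hw : IsWeightVector 𝒯 w)
    (hT : IsTube G T) (hT𝒯 : T ∉ 𝒯) : totalWeight T.card < ∑ v ∈ T, w v := by
  obtain ⟨S, hS, hTS, hleast⟩ := hmax.1.exists_least_superset hT.1
  obtain ⟨r, hr⟩ := hmax.1.exists_isRoot (hmax.1.induce_connected hG hS)
  have hTS' : T ⊂ S := by
    refine lt_of_le_of_ne hTS fun hTS => ?_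
    subst hTS
    rcases mem_insert.1 hS with h | h
    exacts [hT.2.1 h, hT𝒯 h]
  have hrT : r ∈ T := by
    by_contra hrT
    obtain ⟨C, hC, hTC⟩ := hmax.1.exists_mem_childTubes_superset_of_connected hT.2.2
      fun v hv => hmax.exists_mem_ssubset_of_ne_root hS hr (hTS hv) (ne_of_mem_of_not_mem hv hrT)
    obtain ⟨hC𝒯, hCS, -⟩ := mem_childTubes.1 hC
    exact hCS.2 (hleast C (mem_insert_of_mem hC𝒯) hTC)
  have hcard : T.card ≤ (S.erase r).card := by
    have := card_lt_card hTS'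
    rw [card_erase_of_mem hr.1]
    omega
  have hgap := two_mul_totalWeight_lt (hT.1.card_pos.trans_le hcard)
  rw [card_erase_add_one hr.1] at hgap
  calc totalWeight T.card ≤ totalWeight (S.erase r).card := totalWeight_mono hcard
    _ < totalWeight S.card - totalWeight (S.erase r).card := by linarith
    _ ≤ w r := hmax.totalWeight_sub_le_weight_root hw hS hr
    _ ≤ ∑ v ∈ T, w v := single_le_sum (fun v _ => hmax.weight_nonneg hw v) hrT

end IsMaxTubing

theorem weight_sum_monotone
    (G : SimpleGraph V) (hG : G.Connected)
    (𝒯 𝒯' : Finset (Finset V)) (h : IsMaxTubing G 𝒯) (h' : IsMaxTubing G 𝒯')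
    (w w' : V → ℤ) (hw : IsWeightVector 𝒯 w) (hw' : IsWeightVector 𝒯' w') :
    ∀ T ∈ 𝒯,
      (∑ v ∈ T, w v) ≤ (∑ v ∈ T, w' v) ∧
      (T ∈ 𝒯' → ∑ v ∈ T, w v = ∑ v ∈ T, w' v) ∧
      (T ∉ 𝒯' → (∑ v ∈ T, w v) < (∑ v ∈ T, w' v)) := by
  intro T hT
  have hsum : ∑ v ∈ T, w v = totalWeight T.card := h.1.sum_eq_totalWeight_of_mem hw hT
  have heq : T ∈ 𝒯' → ∑ v ∈ T, w v = ∑ v ∈ T, w' v := fun hT' => by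
    rw [hsum, h'.1.sum_eq_totalWeight_of_mem hw' hT']
  have hlt : T ∉ 𝒯' → ∑ v ∈ T, w v < ∑ v ∈ T, w' v := fun hT' =>
    hsum ▸ h'.totalWeight_lt_sum hG hw' (h.1.1 T hT) hT'
  refine ⟨?_, heq, hlt⟩
  by_cases hT' : T ∈ 𝒯'
  exacts [(heq hT').le, (hlt hT').le]
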